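/- arXiv:2404.06320 — 2 statements merged into one kernel-verified Lean document; each statement's English description precedes it below -/
import Mathlib

section
/- Let α, β be binary strings each with a₁ ones and a₀ zeros and γ, δ binary strings each with c₁ ones and c₀ zeros, with c₀ > a₀ and a₁ > c₁. Then c_{αγ, sort(α)sort(δ)}^{(δβ)^∨} = 0; i.e. there exist no parallelogram-shaped puzzles with boundary (α,γ,β,δ) in this case. -/
/-- Binary strings: `true` represents the digit `1`, `false` represents the digit `0`. -/
abbrev BinStr : Type := List Bool

namespace BinStr

/-- The number of ones of a binary string. -/
def ones : BinStr → ℕ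
  | [] => 0
  | true :: s => ones s + 1
  | false :: s => ones s

/-- The number of zeros of a binary string. -/
def zeros : BinStr → ℕ
  | [] => 0
  | true :: s => zeros s
  | false :: s => zeros s + 1

/-- `sort σ = 0^{#zeros σ} 1^{#ones σ}`, the weakly increasing rearrangement. -/
def sort (s : BinStr) : BinStr :=
  List.replicate (zeros s) false ++ List.replicate (ones s) true

/-- The `r`-th part (0-indexed) of the partition associated to a binary string:
the number of zeros occurring to the right of the `(r+1)`-st one.  Under the
NW-corner reading of the string (step left on `0`, down on `1`) this is the
length of row `r` of the corresponding Young diagram. -/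
def part : BinStr → ℕ → ℕ
  | [], _ => 0
  | true :: s, 0 => zeros s
  | true :: s, r + 1 => part s r
  | false :: s, r => part s r

/-- The cell `(r, c)` belongs to the skew Young diagram `ν/λ`. -/
def InSkew (lam nu : BinStr) (r c : ℕ) : Prop :=
  part lam r ≤ c ∧ c < part nu r

/-- `T` is a Littlewood–Richardson skew tableau of shape `ν/λ` and content `μ`:
a semistandard filling of the skew diagram `ν/λ` with positive integers whose
reverse reading word is a ballot sequence, with `μ_i` entries equal to `i`. -/
structure IsLRTableau (lam mu nu : BinStr) (T : ℕ → ℕ → ℕ) : Prop where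
  contained : ∀ r, part lam r ≤ part nu r
  supp : ∀ r c, ¬ InSkew lam nu r c → T r c = 0
  pos : ∀ r c, InSkew lam nu r c → 1 ≤ T r c
  rowWeak : ∀ r c c', InSkew lam nu r c → InSkew lam nu r c' → c ≤ c' → T r c ≤ T r c'
  colStrict : ∀ r r' c, InSkew lam nu r c → InSkew lam nu r' c → r < r' → T r c < T r' c
  content : ∀ i,
      Nat.card {p : ℕ × ℕ // InSkew lam nu p.1 p.2 ∧ T p.1 p.2 = i + 1} = part mu i
  ballot : ∀ r c i,
      Nat.card {p : ℕ × ℕ // InSkew lam nu p.1 p.2 ∧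
          (p.1 < r ∨ (p.1 = r ∧ c ≤ p.2)) ∧ T p.1 p.2 = i + 2} ≤
        Nat.card {p : ℕ × ℕ // InSkew lam nu p.1 p.2 ∧
          (p.1 < r ∨ (p.1 = r ∧ c ≤ p.2)) ∧ T p.1 p.2 = i + 1}

/-- The Littlewood–Richardson number `c_{λ,μ}^{ν}` of binary strings: the number
of Littlewood–Richardson skew tableaux of shape `ν/λ` and content `μ`. -/
noncomputable def lr (lam mu nu : BinStr) : ℕ :=
  Nat.card {T : ℕ → ℕ → ℕ // IsLRTableau lam mu nu T}

end BinStr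

open BinStr

namespace BinStrAux
open BinStr

theorem ones_eq_count (s : BinStr) : ones s = s.count true := by
  induction s with
  | nil => rfl
  | cons b s ih => cases b <;> simp [ones, ih, List.count_cons]

theorem zeros_eq_count (s : BinStr) : zeros s = s.count false := by
  induction s with
  | nil => rfl
  | cons b s ih => cases b <;> simp [zeros, ih, List.count_cons]

theorem ones_append (s t : BinStr) : ones (s ++ t) = ones s + ones t := by
  simp [ones_eq_count, List.count_append]

theorem zeros_append (s t : BinStr) : zeros (s ++ t) = zeros s + zeros t := by
  simp [zeros_eq_count, List.count_append]

theorem ones_reverse (s : BinStr) : ones s.reverse = ones s := by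
  simp [ones_eq_count, List.count_reverse]

theorem zeros_reverse (s : BinStr) : zeros s.reverse = zeros s := by
  simp [zeros_eq_count, List.count_reverse]

theorem zeros_replicate_false (n : ℕ) : zeros (List.replicate n false) = n := by
  simp [zeros_eq_count]

theorem zeros_replicate_true (n : ℕ) : zeros (List.replicate n true) = 0 := by
  induction n with
  | zero => rfl
  | succ n ih => simpa [List.replicate_succ, zeros] using ih

theorem part_eq_zero {s : BinStr} {r : ℕ} (h : ones s ≤ r) : part s r = 0 := by
  induction s generalizing r with
  | nil => rfl
  | cons b s ih =>
    cases b with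
    | true =>
      cases r with
      | zero => simp [ones] at h
      | succ r => exact ih (by simpa [ones] using h)
    | false => exact ih (by simpa [ones] using h)

theorem part_le_zeros (s : BinStr) (r : ℕ) : part s r ≤ zeros s := by
  induction s generalizing r with
  | nil => exact le_refl 0
  | cons b s ih =>
    cases b with
    | true =>
      cases r with
      | zero => simp [part, zeros]
      | succ r => simpa [part, zeros] using ih r
    | false => simpa [part, zeros] using (ih r).trans (Nat.le_succ _)

theorem le_part_append {s : BinStr} (t : BinStr) {r : ℕ} (h : r < ones s) :
    zeros t ≤ part (s ++ t) r := by
  induction s generalizing r with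
  | nil => simp [ones] at h
  | cons b s ih =>
    cases b with
    | true =>
      cases r with
      | zero => simpa [part, zeros_append] using Nat.le_add_left _ _
      | succ r => exact ih (by simpa [ones] using h)
    | false => exact ih (by simpa [ones] using h)

theorem part_replicate_false (n : ℕ) (s : BinStr) (r : ℕ) :
    part (List.replicate n false ++ s) r = part s r := by
  induction n with
  | zero => rfl
  | succ n ih => simpa [List.replicate_succ, part] using ih

theorem part_replicate_true (n : ℕ) (s : BinStr) :
    part (List.replicate (n + 1) true ++ s) n = zeros s := by
  induction n with
  | zero => simp [List.replicate_succ, part, zeros_append, zeros_replicate_true]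
  | succ n ih => simpa [List.replicate_succ, part] using ih

end BinStrAux

section Main
open BinStr BinStrAux

theorem finite_skew (lam nu : BinStr) (P : ℕ × ℕ → Prop) :
    {p : ℕ × ℕ | InSkew lam nu p.1 p.2 ∧ P p}.Finite := by
  apply Set.Finite.subset ((Set.finite_Iio (ones nu)).prod (Set.finite_Iio (zeros nu)))
  rintro ⟨r, c⟩ ⟨hsk, -⟩
  have h2 : c < part nu r := hsk.2
  refine ⟨?_, ?_⟩
  · show r ∈ Set.Iio (ones nu)
    simp only [Set.mem_Iio]
    by_contra h
    rw [part_eq_zero (le_of_not_gt h)] at h2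
    omega
  · show c ∈ Set.Iio (zeros nu)
    simp only [Set.mem_Iio]
    exact lt_of_lt_of_le h2 (part_le_zeros _ _)

theorem card_mono_aux (lam nu : BinStr) {P Q : ℕ × ℕ → Prop}
    (h : ∀ p : ℕ × ℕ, InSkew lam nu p.1 p.2 → P p → Q p) :
    Nat.card {p : ℕ × ℕ // InSkew lam nu p.1 p.2 ∧ P p} ≤
      Nat.card {p : ℕ × ℕ // InSkew lam nu p.1 p.2 ∧ Q p} :=
  Nat.card_mono (finite_skew lam nu Q) (fun p hp => ⟨hp.1, h p hp.1 hp.2⟩)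

theorem card_congr_aux (lam nu : BinStr) (T : ℕ → ℕ → ℕ) {r₁ r₂ v₁ v₂ : ℕ}
    (hr : r₁ = r₂) (hv : v₁ = v₂) :
    Nat.card {p : ℕ × ℕ // InSkew lam nu p.1 p.2 ∧ p.1 < r₁ ∧ T p.1 p.2 = v₁} =
      Nat.card {p : ℕ × ℕ // InSkew lam nu p.1 p.2 ∧ p.1 < r₂ ∧ T p.1 p.2 = v₂} := by
  subst hr; subst hv; rfl

/-- Key lemma: the number of entries `v+2` in rows `≤ r` is at most the number of
entries `v+1` in rows `< r`. -/
theorem card_row_lt {lam mu nu : BinStr} {T : ℕ → ℕ → ℕ} (hT : IsLRTableau lam mu nu T)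
    (v r : ℕ) :
    Nat.card {p : ℕ × ℕ // InSkew lam nu p.1 p.2 ∧ p.1 < r + 1 ∧ T p.1 p.2 = v + 2} ≤
      Nat.card {p : ℕ × ℕ // InSkew lam nu p.1 p.2 ∧ p.1 < r ∧ T p.1 p.2 = v + 1} := by
  classical
  by_cases hex : ∃ c, InSkew lam nu r c ∧ T r c = v + 2
  · set c := Nat.find hex with hc
    obtain ⟨hcsk, hcT⟩ : InSkew lam nu r c ∧ T r c = v + 2 := Nat.find_spec hex
    have h1 : Nat.card {p : ℕ × ℕ // InSkew lam nu p.1 p.2 ∧ p.1 < r + 1 ∧ T p.1 p.2 = v + 2} ≤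
        Nat.card {p : ℕ × ℕ // InSkew lam nu p.1 p.2 ∧
          (p.1 < r ∨ (p.1 = r ∧ c ≤ p.2)) ∧ T p.1 p.2 = v + 2} := by
      apply card_mono_aux
      intro p hsk hp
      obtain ⟨hlt, hv⟩ := hp
      refine ⟨?_, hv⟩
      rcases Nat.lt_or_ge p.1 r with h | h
      · exact Or.inl h
      · have hpr : p.1 = r := by omega
        refine Or.inr ⟨hpr, ?_⟩
        by_contra hlt'
        refine Nat.find_min hex (lt_of_not_ge hlt') ⟨?_, ?_⟩
        · rw [← hpr]; exact hsk
        · rw [← hpr]; exact hv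
    have h2 := hT.ballot r c v
    have h3 : Nat.card {p : ℕ × ℕ // InSkew lam nu p.1 p.2 ∧
          (p.1 < r ∨ (p.1 = r ∧ c ≤ p.2)) ∧ T p.1 p.2 = v + 1} ≤
        Nat.card {p : ℕ × ℕ // InSkew lam nu p.1 p.2 ∧ p.1 < r ∧ T p.1 p.2 = v + 1} := by
      apply card_mono_aux
      intro p hsk hp
      obtain ⟨hor, hv⟩ := hp
      refine ⟨?_, hv⟩
      rcases hor with h | ⟨hpr, hle⟩
      · exact h
      · exfalso
        have hcsk' : InSkew lam nu p.1 c := by rw [hpr]; exact hcsk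
        have hcT' : T p.1 c = v + 2 := by rw [hpr]; exact hcT
        have := hT.rowWeak p.1 c p.2 hcsk' hsk hle
        omega
    exact (h1.trans h2).trans h3
  · cases r with
    | zero =>
      have : IsEmpty {p : ℕ × ℕ // InSkew lam nu p.1 p.2 ∧ p.1 < 0 + 1 ∧ T p.1 p.2 = v + 2} := by
        constructor
        rintro ⟨⟨pr, pc⟩, hsk, hlt, hv⟩
        have hsk' : InSkew lam nu pr pc := hsk
        have hlt' : pr < 1 := hlt
        have hv' : T pr pc = v + 2 := hv
        have h0 : pr = 0 := by omega
        subst h0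
        exact hex ⟨pc, hsk', hv'⟩
      rw [Nat.card_of_isEmpty]
      exact Nat.zero_le _
    | succ r' =>
      have h1 : Nat.card {p : ℕ × ℕ // InSkew lam nu p.1 p.2 ∧ p.1 < r' + 1 + 1 ∧ T p.1 p.2 = v + 2} ≤
          Nat.card {p : ℕ × ℕ // InSkew lam nu p.1 p.2 ∧
            (p.1 < r' ∨ (p.1 = r' ∧ 0 ≤ p.2)) ∧ T p.1 p.2 = v + 2} := by
        apply card_mono_aux
        intro p hsk hp
        obtain ⟨hlt, hv⟩ := hp
        have hne : p.1 ≠ r' + 1 := fun h =>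
          hex ⟨p.2, by rw [← h]; exact hsk, by rw [← h]; exact hv⟩
        exact ⟨by omega, hv⟩
      have h2 := hT.ballot r' 0 v
      have h3 : Nat.card {p : ℕ × ℕ // InSkew lam nu p.1 p.2 ∧
            (p.1 < r' ∨ (p.1 = r' ∧ 0 ≤ p.2)) ∧ T p.1 p.2 = v + 1} ≤
          Nat.card {p : ℕ × ℕ // InSkew lam nu p.1 p.2 ∧ p.1 < r' + 1 ∧ T p.1 p.2 = v + 1} := by
        apply card_mono_aux
        intro p hsk hp
        obtain ⟨hor, hv⟩ := hp
        refine ⟨?_, hv⟩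
        rcases hor with h | ⟨h, -⟩ <;> omega
      exact (h1.trans h2).trans h3

theorem card_chain {lam mu nu : BinStr} {T : ℕ → ℕ → ℕ} (hT : IsLRTableau lam mu nu T)
    (j r : ℕ) :
    Nat.card {p : ℕ × ℕ // InSkew lam nu p.1 p.2 ∧ p.1 < r + j ∧ T p.1 p.2 = j + 1} ≤
      Nat.card {p : ℕ × ℕ // InSkew lam nu p.1 p.2 ∧ p.1 < r ∧ T p.1 p.2 = 1} := by
  induction j with
  | zero => exact le_of_eq (card_congr_aux lam nu T (by omega) (by omega))
  | succ j ih =>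
    calc Nat.card {p : ℕ × ℕ // InSkew lam nu p.1 p.2 ∧ p.1 < r + (j + 1) ∧ T p.1 p.2 = j + 1 + 1}
        = Nat.card {p : ℕ × ℕ // InSkew lam nu p.1 p.2 ∧ p.1 < (r + j) + 1 ∧ T p.1 p.2 = j + 2} :=
          card_congr_aux lam nu T (by omega) (by omega)
      _ ≤ Nat.card {p : ℕ × ℕ // InSkew lam nu p.1 p.2 ∧ p.1 < r + j ∧ T p.1 p.2 = j + 1} :=
          card_row_lt hT j (r + j)
      _ ≤ _ := ih

end Main

/-- no parallelogram-shaped puzzles when `c₀ > a₀` and `a₁ > c₁`: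
`c_{αγ, sort(α)sort(δ)}^{(δβ)^∨} = 0`. -/
theorem lr_parallelogram_vanishing
    (a₀ a₁ c₀ c₁ : ℕ) (α β γ δ : BinStr)
    (hα₁ : ones α = a₁) (hα₀ : zeros α = a₀)
    (hβ₁ : ones β = a₁) (hβ₀ : zeros β = a₀)
    (hγ₁ : ones γ = c₁) (hγ₀ : zeros γ = c₀)
    (hδ₁ : ones δ = c₁) (hδ₀ : zeros δ = c₀)
    (hc₀ : a₀ < c₀) (hc₁ : c₁ < a₁) :
    lr (α ++ γ) (sort α ++ sort δ) (δ ++ β).reverse = 0 := by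
  obtain ⟨a₁', rfl⟩ : ∃ k, a₁ = k + 1 := ⟨a₁ - 1, by omega⟩
  have hempty : IsEmpty
      {T : ℕ → ℕ → ℕ // IsLRTableau (α ++ γ) (sort α ++ sort δ) (δ ++ β).reverse T} := by
    constructor
    rintro ⟨T, hT⟩
    -- every cell of the skew shape lies in a row `< c₁ + 1 + a₁'`
    have hones_nu : ones (δ ++ β).reverse = c₁ + 1 + a₁' := by
      rw [BinStrAux.ones_reverse, BinStrAux.ones_append, hδ₁, hβ₁]; omega
    have hzeros_nu : zeros (δ ++ β).reverse = c₀ + a₀ := by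
      rw [BinStrAux.zeros_reverse, BinStrAux.zeros_append, hδ₀, hβ₀]
    have hrow : ∀ p : ℕ × ℕ, InSkew (α ++ γ) (δ ++ β).reverse p.1 p.2 →
        p.1 < c₁ + 1 + a₁' := by
      intro p hp
      by_contra h
      have h0 : part (δ ++ β).reverse p.1 = 0 :=
        BinStrAux.part_eq_zero (by omega)
      have := hp.2
      omega
    -- the total number of entries equal to `a₁' + 1` is `c₀`
    have hmu : part (sort α ++ sort δ) a₁' = c₀ := by
      rw [sort, sort, hα₀, hα₁, hδ₀, hδ₁, List.append_assoc,
        BinStrAux.part_replicate_false, BinStrAux.part_replicate_true,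
        BinStrAux.zeros_append, BinStrAux.zeros_replicate_false,
        BinStrAux.zeros_replicate_true]
      omega
    have hcontent := hT.content a₁'
    rw [hmu] at hcontent
    -- adding the (automatic) row restriction
    have hbig : Nat.card {p : ℕ × ℕ // InSkew (α ++ γ) (δ ++ β).reverse p.1 p.2 ∧
        p.1 < (c₁ + 1) + a₁' ∧ T p.1 p.2 = a₁' + 1} = c₀ := by
      rw [← hcontent]
      apply Nat.card_congr
      apply Equiv.subtypeEquivRight
      intro p
      constructor
      · rintro ⟨h1, -, h3⟩; exact ⟨h1, h3⟩
      · rintro ⟨h1, h3⟩; exact ⟨h1, by have := hrow p h1; omega, h3⟩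
    -- the chain inequality
    have hchain := card_chain hT a₁' (c₁ + 1)
    rw [hbig] at hchain
    -- the entries `1` in rows `≤ c₁` lie in distinct columns of `[c₀, c₀ + a₀)`
    have hsmall : Nat.card {p : ℕ × ℕ // InSkew (α ++ γ) (δ ++ β).reverse p.1 p.2 ∧
        p.1 < c₁ + 1 ∧ T p.1 p.2 = 1} ≤ a₀ := by
      have hfin : Finite {x // x ∈ Finset.Ico c₀ (c₀ + a₀)} := inferInstance
      have hcard : Nat.card {x // x ∈ Finset.Ico c₀ (c₀ + a₀)} = a₀ := by
        rw [Nat.card_eq_finsetCard, Nat.card_Ico]; omega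
      rw [← hcard]
      have hcol : ∀ p : ℕ × ℕ, InSkew (α ++ γ) (δ ++ β).reverse p.1 p.2 →
          p.1 < c₁ + 1 → p.2 ∈ Finset.Ico c₀ (c₀ + a₀) := by
        intro p hp hplt
        rw [Finset.mem_Ico]
        constructor
        · have h1 : zeros γ ≤ part (α ++ γ) p.1 :=
            BinStrAux.le_part_append γ (by rw [hα₁]; omega)
          have := hp.1
          omega
        · have h2 : part (δ ++ β).reverse p.1 ≤ zeros (δ ++ β).reverse :=
            BinStrAux.part_le_zeros _ _
          have := hp.2
          omega
      apply Nat.card_le_card_of_injective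
        (fun x => (⟨x.1.2, hcol x.1 x.2.1 x.2.2.1⟩ : {x // x ∈ Finset.Ico c₀ (c₀ + a₀)}))
      intro x y hxy
      have hcc : x.1.2 = y.1.2 := congrArg Subtype.val hxy
      rcases Nat.lt_trichotomy x.1.1 y.1.1 with h | h | h
      · exfalso
        have := hT.colStrict x.1.1 y.1.1 x.1.2 x.2.1 (by rw [hcc]; exact y.2.1) h
        have h1 := x.2.2.2
        have h2 := y.2.2.2
        rw [← hcc] at h2
        omega
      · apply Subtype.ext
        exact Prod.ext h hcc
      · exfalso
        have := hT.colStrict y.1.1 x.1.1 x.1.2 (by rw [hcc]; exact y.2.1) x.2.1 h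
        have h1 := x.2.2.2
        have h2 := y.2.2.2
        rw [← hcc] at h2
        omega
    omega
  exact Nat.card_of_isEmpty
end

section
/- Let a₀, a₁, c₀, c₁ be nonnegative integers, a := a₀+a₁, c := c₀+c₁. Let Ω : Gr(a₁, F_a) × Gr(c₁, F̃_c) → Gr(a₁+c₁, ℂ^{a+c}) be the direct sum map (V, W) ↦ V ⊕ W, where F_a = span(e₁,…,e_a) and F̃_c = span(e_{a+1},…,e_{a+c}). Then for binary strings α, β with a₁ ones and a₀ zeros and γ, δ with c₁ ones and c₀ zeros, the Schubert varieties satisfy X_{αγ} ∩ X^{(δβ)^∨} = Ω((X_α ∩ X^{β^∨}) × (X_γ ∩ X^{δ^∨})), where X_λ is the Schubert variety for the standard flag and X^λ the opposite Schubert variety for the anti-standard flag. -/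
open BinStr

/-- The span of the coordinate vectors `e_j` of `ℂ^n` for `j ∈ S`. -/
noncomputable def coordSpan (n : ℕ) (S : Set ℕ) : Submodule ℂ (Fin n → ℂ) :=
  Submodule.span ℂ {v | ∃ j : Fin n, (j : ℕ) ∈ S ∧ v = Pi.single j 1}

/-- The Schubert variety (as a set of subspaces of `ℂ^n`): the `k`-dimensional
subspaces `V` contained in the ambient subspace `amb` such that
`dim (V ∩ F i) ≥ λ₁ + ⋯ + λ_i` for all `i`, for the flag `F` and binary string `λ`. -/
def schubertSet (n k : ℕ) (amb : Submodule ℂ (Fin n → ℂ)) (lam : BinStr)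
    (F : ℕ → Submodule ℂ (Fin n → ℂ)) : Set (Submodule ℂ (Fin n → ℂ)) :=
  {V | Module.finrank ℂ V = k ∧ V ≤ amb ∧
    ∀ i, ones (lam.take i) ≤ Module.finrank ℂ ↥(V ⊓ F i)}


namespace BinStr

lemma ones_append (s t : BinStr) : ones (s ++ t) = ones s + ones t := by
  induction s with
  | nil => simp [ones]
  | cons b s ih => cases b <;> simp [ones, ih] <;> omega

lemma length_eq (s : BinStr) : s.length = zeros s + ones s := by
  induction s with
  | nil => simp [ones, zeros]
  | cons b s ih => cases b <;> simp [ones, zeros, ih] <;> omega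

lemma take_append_of_le {s t : BinStr} {i : ℕ} (h : i ≤ s.length) :
    (s ++ t).take i = s.take i := by
  rw [List.take_append, Nat.sub_eq_zero_of_le h]
  simp

lemma take_append_add (s t : BinStr) (i : ℕ) :
    (s ++ t).take (s.length + i) = s ++ t.take i := by
  rw [List.take_append, List.take_of_length_le (by omega)]
  simp

end BinStr

lemma mem_coordSpan {n : ℕ} {S : Set ℕ} {f : Fin n → ℂ} :
    f ∈ coordSpan n S ↔ ∀ j : Fin n, (j : ℕ) ∉ S → f j = 0 := by
  constructor
  · intro hf
    induction hf using Submodule.span_induction with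
    | mem x hx =>
      obtain ⟨j, hj, rfl⟩ := hx
      intro k hk
      have : k ≠ j := by rintro rfl; exact hk hj
      simp [Pi.single_apply, this]
    | zero => simp
    | add x y _ _ hx hy => intro k hk; simp [hx k hk, hy k hk]
    | smul a x _ hx => intro k hk; simp [hx k hk]
  · intro h
    have hf : f = ∑ j : Fin n, f j • (Pi.single j 1 : Fin n → ℂ) := by
      ext k
      simp [Pi.single_apply]
    rw [hf]
    refine Submodule.sum_mem _ fun j _ => ?_
    by_cases hj : (j : ℕ) ∈ S
    · exact Submodule.smul_mem _ _ (Submodule.subset_span ⟨j, hj, rfl⟩)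
    · rw [h j hj]; simp

lemma coordSpan_mono {n : ℕ} {S T : Set ℕ} (h : ∀ j, j ∈ S → j ∈ T) :
    coordSpan n S ≤ coordSpan n T := by
  intro f hf
  rw [mem_coordSpan] at hf ⊢
  exact fun j hj => hf j (fun hjS => hj (h _ hjS))

lemma coordSpan_inf {n : ℕ} (S T : Set ℕ) :
    coordSpan n S ⊓ coordSpan n T = coordSpan n (S ∩ T) := by
  ext f
  rw [Submodule.mem_inf, mem_coordSpan, mem_coordSpan, mem_coordSpan]
  constructor
  · rintro ⟨h1, h2⟩ j hj
    by_cases hS : (j : ℕ) ∈ S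
    · exact h2 j fun hT => hj ⟨hS, hT⟩
    · exact h1 j hS
  · intro h
    exact ⟨fun j hj => h j fun hm => hj hm.1, fun j hj => h j fun hm => hj hm.2⟩

lemma coordSpan_disjoint {n : ℕ} {S T : Set ℕ} (h : ∀ j, j ∈ S → j ∈ T → False) :
    coordSpan n S ⊓ coordSpan n T = ⊥ := by
  rw [coordSpan_inf, Submodule.eq_bot_iff]
  intro f hf
  rw [mem_coordSpan] at hf
  funext j
  exact hf j fun hm => h _ hm.1 hm.2

lemma finrank_sup_disjoint {n : ℕ} {V W : Submodule ℂ (Fin n → ℂ)} (h : V ⊓ W = ⊥) :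
    Module.finrank ℂ ↥(V ⊔ W) = Module.finrank ℂ V + Module.finrank ℂ W := by
  have := Submodule.finrank_sup_add_finrank_inf_eq V W
  rw [h] at this
  simpa using this

/-- Lemma 1, set version: with `n := (a₀+a₁)+(c₀+c₁)` and
`a := a₀+a₁`, `X_{αγ} ∩ X^{(δβ)^∨} = Ω((X_α ∩ X^{β^∨}) × (X_γ ∩ X^{δ^∨}))`, where
`Ω(V, W) = V ⊕ W` is the direct sum map, `X_λ` is taken with respect to the standard
flag, `X^λ = X_{λ^∨}(anti-standard flag)`, and the Schubert varieties of the factor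
Grassmannians `Gr(a₁, F_a)`, `Gr(c₁, F̃_c)` are taken with respect to the flags induced
by the standard/anti-standard orderings of their basis vectors. -/
theorem schubert_intersection_direct_sum
    (a₀ a₁ c₀ c₁ : ℕ) (α β γ δ : BinStr)
    (hα₁ : ones α = a₁) (hα₀ : zeros α = a₀)
    (hβ₁ : ones β = a₁) (hβ₀ : zeros β = a₀)
    (hγ₁ : ones γ = c₁) (hγ₀ : zeros γ = c₀)
    (hδ₁ : ones δ = c₁) (hδ₀ : zeros δ = c₀) :
    schubertSet (a₀ + a₁ + (c₀ + c₁)) (a₁ + c₁) ⊤ (α ++ γ)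
        (fun i => coordSpan (a₀ + a₁ + (c₀ + c₁)) {j | j < i}) ∩
      schubertSet (a₀ + a₁ + (c₀ + c₁)) (a₁ + c₁) ⊤ (δ ++ β)
        (fun i => coordSpan (a₀ + a₁ + (c₀ + c₁)) {j | a₀ + a₁ + (c₀ + c₁) - i ≤ j}) =
    (fun p : Submodule ℂ (Fin (a₀ + a₁ + (c₀ + c₁)) → ℂ) ×
        Submodule ℂ (Fin (a₀ + a₁ + (c₀ + c₁)) → ℂ) => p.1 ⊔ p.2) ''
      ((schubertSet (a₀ + a₁ + (c₀ + c₁)) a₁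
          (coordSpan (a₀ + a₁ + (c₀ + c₁)) {j | j < a₀ + a₁}) α
          (fun i => coordSpan (a₀ + a₁ + (c₀ + c₁)) {j | j < i}) ∩
        schubertSet (a₀ + a₁ + (c₀ + c₁)) a₁
          (coordSpan (a₀ + a₁ + (c₀ + c₁)) {j | j < a₀ + a₁}) β
          (fun i => coordSpan (a₀ + a₁ + (c₀ + c₁)) {j | a₀ + a₁ - i ≤ j ∧ j < a₀ + a₁})) ×ˢ
       (schubertSet (a₀ + a₁ + (c₀ + c₁)) c₁
          (coordSpan (a₀ + a₁ + (c₀ + c₁)) {j | a₀ + a₁ ≤ j}) γ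
          (fun i => coordSpan (a₀ + a₁ + (c₀ + c₁)) {j | a₀ + a₁ ≤ j ∧ j < a₀ + a₁ + i}) ∩
        schubertSet (a₀ + a₁ + (c₀ + c₁)) c₁
          (coordSpan (a₀ + a₁ + (c₀ + c₁)) {j | a₀ + a₁ ≤ j}) δ
          (fun i => coordSpan (a₀ + a₁ + (c₀ + c₁)) {j | a₀ + a₁ + (c₀ + c₁) - i ≤ j}))) := by
  
  classical
  have hlα : α.length = a₀ + a₁ := by rw [length_eq, hα₀, hα₁]
  have hlβ : β.length = a₀ + a₁ := by rw [length_eq, hβ₀, hβ₁]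
  have hlγ : γ.length = c₀ + c₁ := by rw [length_eq, hγ₀, hγ₁]
  have hlδ : δ.length = c₀ + c₁ := by rw [length_eq, hδ₀, hδ₁]
  set n := a₀ + a₁ + (c₀ + c₁) with hn
  set a := a₀ + a₁ with ha
  have hAV_AW : coordSpan n {j | j < a} ⊓ coordSpan n {j | a ≤ j} = ⊥ :=
    coordSpan_disjoint fun j h1 h2 => by
      simp only [Set.mem_setOf_eq] at h1 h2; omega
  ext U
  simp only [Set.mem_inter_iff, Set.mem_image, Set.mem_prod, Prod.exists]
  constructor
  · -- forward direction
    rintro ⟨⟨hUk, -, hUF⟩, -, -, hUFt⟩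
    replace hUF : ∀ i, ones ((α ++ γ).take i) ≤
        Module.finrank ℂ ↥(U ⊓ coordSpan n {j | j < i}) := hUF
    replace hUFt : ∀ i, ones ((δ ++ β).take i) ≤
        Module.finrank ℂ ↥(U ⊓ coordSpan n {j | n - i ≤ j}) := hUFt
    set V := U ⊓ coordSpan n {j | j < a} with hVdef
    set W := U ⊓ coordSpan n {j | a ≤ j} with hWdef
    have hVAV : V ≤ coordSpan n {j | j < a} := inf_le_right
    have hWAW : W ≤ coordSpan n {j | a ≤ j} := inf_le_right
    have hVWbot : V ⊓ W = ⊥ :=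
      le_bot_iff.mp (le_trans (inf_le_inf hVAV hWAW) hAV_AW.le)
    have ha1 : a₁ ≤ Module.finrank ℂ V := by
      have h := hUF a
      have e1 : (α ++ γ).take a = α := by
        rw [take_append_of_le (le_of_eq hlα.symm), List.take_of_length_le (le_of_eq hlα)]
      rwa [e1, hα₁] at h
    have hc1 : c₁ ≤ Module.finrank ℂ W := by
      have h := hUFt (c₀ + c₁)
      have e2 : {j | n - (c₀ + c₁) ≤ j} = {j | a ≤ j} := by
        ext j; simp only [Set.mem_setOf_eq]; omega
      have e3 : (δ ++ β).take (c₀ + c₁) = δ := by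
        rw [take_append_of_le (le_of_eq hlδ.symm), List.take_of_length_le (le_of_eq hlδ)]
      rwa [e2, e3, hδ₁] at h
    have hsup_le : V ⊔ W ≤ U := sup_le inf_le_left inf_le_left
    have hfr : Module.finrank ℂ ↥(V ⊔ W) = Module.finrank ℂ V + Module.finrank ℂ W :=
      finrank_sup_disjoint hVWbot
    have hle : Module.finrank ℂ V + Module.finrank ℂ W ≤ a₁ + c₁ := by
      rw [← hfr, ← hUk]
      exact Submodule.finrank_mono hsup_le
    have hfV : Module.finrank ℂ V = a₁ := by omega
    have hfW : Module.finrank ℂ W = c₁ := by omega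
    have hUeq : V ⊔ W = U :=
      Submodule.eq_of_le_of_finrank_le hsup_le (le_of_eq (by rw [hUk, hfr, hfV, hfW]))
    have condα : ∀ i, ones (α.take i) ≤ Module.finrank ℂ ↥(V ⊓ coordSpan n {j | j < i}) := by
      intro i
      rcases le_or_gt i a with h | h
      · have e : V ⊓ coordSpan n {j | j < i} = U ⊓ coordSpan n {j | j < i} := by
          rw [hVdef, inf_assoc, inf_eq_right.mpr
            (coordSpan_mono fun j hj => by simp only [Set.mem_setOf_eq] at *; omega)]
        rw [e]
        have h2 := hUF i
        rwa [take_append_of_le (by omega)] at h2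
      · have hsub : V ≤ coordSpan n {j | j < i} :=
          le_trans hVAV (coordSpan_mono fun j hj => by simp only [Set.mem_setOf_eq] at *; omega)
        rw [inf_eq_left.mpr hsub, List.take_of_length_le (by omega), hα₁, hfV]
    have condβ : ∀ i, ones (β.take i) ≤
        Module.finrank ℂ ↥(V ⊓ coordSpan n {j | a - i ≤ j ∧ j < a}) := by
      intro i
      have hWle : W ≤ coordSpan n {j | n - (c₀ + c₁ + i) ≤ j} :=
        le_trans hWAW (coordSpan_mono fun j hj => by simp only [Set.mem_setOf_eq] at *; omega)
      have e1 : coordSpan n {j | j < a} ⊓ coordSpan n {j | n - (c₀ + c₁ + i) ≤ j} =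
          coordSpan n {j | a - i ≤ j ∧ j < a} := by
        rw [coordSpan_inf]
        congr 1
        ext j; simp only [Set.mem_inter_iff, Set.mem_setOf_eq]; omega
      have hkey : U ⊓ coordSpan n {j | n - (c₀ + c₁ + i) ≤ j} =
          (V ⊓ coordSpan n {j | a - i ≤ j ∧ j < a}) ⊔ W := by
        rw [← hUeq, sup_comm V W, sup_inf_assoc_of_le _ hWle, sup_comm]
        congr 1
        rw [← e1, ← inf_assoc, inf_eq_left.mpr hVAV]
      have hd : (V ⊓ coordSpan n {j | a - i ≤ j ∧ j < a}) ⊓ W = ⊥ :=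
        le_bot_iff.mp (le_trans (inf_le_inf_right W inf_le_left) hVWbot.le)
      have h2 := hUFt (c₀ + c₁ + i)
      have e3 : (δ ++ β).take (c₀ + c₁ + i) = δ ++ β.take i := by
        rw [show c₀ + c₁ + i = δ.length + i by omega, take_append_add]
      rw [e3, ones_append, hδ₁, hkey, finrank_sup_disjoint hd, hfW] at h2
      omega
    have condγ : ∀ i, ones (γ.take i) ≤
        Module.finrank ℂ ↥(W ⊓ coordSpan n {j | a ≤ j ∧ j < a + i}) := by
      intro i
      have hVle : V ≤ coordSpan n {j | j < a + i} :=
        le_trans hVAV (coordSpan_mono fun j hj => by simp only [Set.mem_setOf_eq] at *; omega)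
      have e1 : coordSpan n {j | a ≤ j} ⊓ coordSpan n {j | j < a + i} =
          coordSpan n {j | a ≤ j ∧ j < a + i} := by
        rw [coordSpan_inf]
        exact congrArg _ (Set.ext fun j => Iff.rfl)
      have hkey : U ⊓ coordSpan n {j | j < a + i} =
          V ⊔ (W ⊓ coordSpan n {j | a ≤ j ∧ j < a + i}) := by
        rw [← hUeq, sup_inf_assoc_of_le _ hVle]
        congr 1
        rw [← e1, ← inf_assoc, inf_eq_left.mpr hWAW]
      have hd : V ⊓ (W ⊓ coordSpan n {j | a ≤ j ∧ j < a + i}) = ⊥ :=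
        le_bot_iff.mp (le_trans (inf_le_inf_left V inf_le_left) hVWbot.le)
      have h2 := hUF (a + i)
      have e3 : (α ++ γ).take (a + i) = α ++ γ.take i := by
        rw [show a + i = α.length + i by omega, take_append_add]
      rw [e3, ones_append, hα₁, hkey, finrank_sup_disjoint hd, hfV] at h2
      omega
    have condδ : ∀ i, ones (δ.take i) ≤
        Module.finrank ℂ ↥(W ⊓ coordSpan n {j | n - i ≤ j}) := by
      intro i
      rcases le_or_gt i (c₀ + c₁) with h | h
      · have e : W ⊓ coordSpan n {j | n - i ≤ j} = U ⊓ coordSpan n {j | n - i ≤ j} := by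
          rw [hWdef, inf_assoc, inf_eq_right.mpr
            (coordSpan_mono fun j hj => by simp only [Set.mem_setOf_eq] at *; omega)]
        rw [e]
        have h2 := hUFt i
        rwa [take_append_of_le (by omega)] at h2
      · have hsub : W ≤ coordSpan n {j | n - i ≤ j} :=
          le_trans hWAW (coordSpan_mono fun j hj => by simp only [Set.mem_setOf_eq] at *; omega)
        rw [inf_eq_left.mpr hsub, List.take_of_length_le (by omega), hδ₁, hfW]
    exact ⟨V, W, ⟨⟨⟨hfV, inf_le_right, condα⟩, hfV, inf_le_right, condβ⟩,
      ⟨hfW, inf_le_right, condγ⟩, hfW, inf_le_right, condδ⟩, hUeq⟩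
  · -- backward direction
    rintro ⟨V, W, ⟨⟨⟨hVk, hVa, hVF⟩, -, -, hVG⟩, ⟨hWk, hWa, hWH⟩, -, -, hWFt⟩, rfl⟩
    have hVWbot : V ⊓ W = ⊥ :=
      le_bot_iff.mp (le_trans (inf_le_inf hVa hWa) hAV_AW.le)
    have hk : Module.finrank ℂ ↥(V ⊔ W) = a₁ + c₁ := by
      rw [finrank_sup_disjoint hVWbot, hVk, hWk]
    refine ⟨⟨hk, le_top, ?_⟩, hk, le_top, ?_⟩
    · intro i
      rcases le_or_gt i a with h | h
      · rw [take_append_of_le (by omega)]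
        exact le_trans (hVF i)
          (Submodule.finrank_mono (inf_le_inf_right _ le_sup_left))
      · obtain ⟨i', rfl⟩ : ∃ i', i = a + i' := ⟨i - a, by omega⟩
        have e3 : (α ++ γ).take (a + i') = α ++ γ.take i' := by
          rw [show a + i' = α.length + i' by omega, take_append_add]
        rw [e3, ones_append, hα₁]
        have hd : V ⊓ (W ⊓ coordSpan n {j | a ≤ j ∧ j < a + i'}) = ⊥ :=
          le_bot_iff.mp (le_trans (inf_le_inf_left V inf_le_left) hVWbot.le)
        have hle : V ⊔ (W ⊓ coordSpan n {j | a ≤ j ∧ j < a + i'}) ≤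
            (V ⊔ W) ⊓ coordSpan n {j | j < a + i'} := by
          refine le_inf (sup_le le_sup_left (le_trans inf_le_left le_sup_right)) (sup_le ?_ ?_)
          · exact le_trans hVa
              (coordSpan_mono fun j hj => by simp only [Set.mem_setOf_eq] at *; omega)
          · exact le_trans inf_le_right
              (coordSpan_mono fun j hj => by simp only [Set.mem_setOf_eq] at *; omega)
        calc a₁ + ones (γ.take i')
            ≤ Module.finrank ℂ V +
              Module.finrank ℂ ↥(W ⊓ coordSpan n {j | a ≤ j ∧ j < a + i'}) :=
              add_le_add (le_of_eq hVk.symm) (hWH i')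
          _ = Module.finrank ℂ ↥(V ⊔ (W ⊓ coordSpan n {j | a ≤ j ∧ j < a + i'})) :=
              (finrank_sup_disjoint hd).symm
          _ ≤ Module.finrank ℂ ↥((V ⊔ W) ⊓ coordSpan n {j | j < a + i'}) :=
              Submodule.finrank_mono hle
    · intro i
      rcases le_or_gt i (c₀ + c₁) with h | h
      · rw [take_append_of_le (by omega)]
        exact le_trans (hWFt i)
          (Submodule.finrank_mono (inf_le_inf_right _ le_sup_right))
      · obtain ⟨i', rfl⟩ : ∃ i', i = c₀ + c₁ + i' := ⟨i - (c₀ + c₁), by omega⟩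
        have e3 : (δ ++ β).take (c₀ + c₁ + i') = δ ++ β.take i' := by
          rw [show c₀ + c₁ + i' = δ.length + i' by omega, take_append_add]
        rw [e3, ones_append, hδ₁]
        have hd : W ⊓ (V ⊓ coordSpan n {j | a - i' ≤ j ∧ j < a}) = ⊥ := by
          refine le_bot_iff.mp (le_trans (inf_le_inf_left W inf_le_left) ?_)
          rw [inf_comm]
          exact hVWbot.le
        have hle : W ⊔ (V ⊓ coordSpan n {j | a - i' ≤ j ∧ j < a}) ≤
            (V ⊔ W) ⊓ coordSpan n {j | n - (c₀ + c₁ + i') ≤ j} := by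
          refine le_inf (sup_le le_sup_right (le_trans inf_le_left le_sup_left)) (sup_le ?_ ?_)
          · exact le_trans hWa
              (coordSpan_mono fun j hj => by simp only [Set.mem_setOf_eq] at *; omega)
          · exact le_trans inf_le_right
              (coordSpan_mono fun j hj => by simp only [Set.mem_setOf_eq] at *; omega)
        calc c₁ + ones (β.take i')
            ≤ Module.finrank ℂ W +
              Module.finrank ℂ ↥(V ⊓ coordSpan n {j | a - i' ≤ j ∧ j < a}) :=
              add_le_add (le_of_eq hWk.symm) (hVG i')
          _ = Module.finrank ℂ ↥(W ⊔ (V ⊓ coordSpan n {j | a - i' ≤ j ∧ j < a})) :=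
              (finrank_sup_disjoint hd).symm
          _ ≤ Module.finrank ℂ ↥((V ⊔ W) ⊓ coordSpan n {j | n - (c₀ + c₁ + i') ≤ j}) :=
              Submodule.finrank_mono hle
end
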